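/- Pushforward density through an affine coupling layer. Fix D ≥ 2 and 1 ≤ k < D, let s, t : ℝ^k → ℝ^{D−k} be continuously differentiable, and let f : ℝ^D → ℝ^D be the affine coupling layer f(x)_{1:k} = x_{1:k}, f(x)_{k+1:D} = x_{k+1:D} ⊙ exp(s(x_{1:k})) + t(x_{1:k}). Let ν be a probability measure on ℝ^D with density p with respect to Lebesgue measure. Then the pushforward f_*ν has density y ↦ p(f⁻¹(y)) · exp( − Σ_{j=1}^{D−k} s_j(y_{1:k}) ) with respect to Lebesgue measure, where f⁻¹(y) = (y_{1:k}, (y_{k+1:D} − t(y_{1:k})) ⊙ exp(−s(y_{1:k}))). -/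

import Mathlib

/-!
On each fibre `{a} × ℝ^{D-k}` the layer is the affine map `b ↦ b ⊙ exp(s a) + t a`, which
multiplies Lebesgue measure by `exp(-∑ⱼ sⱼ(a))`. By Fubini, `f_* λ` therefore has density
`y ↦ exp(-∑ⱼ sⱼ(y_{1:k}))`, and as `f` is a measurable bijection with inverse `f⁻¹`,
`f_*(p · λ) = (p ∘ f⁻¹) · f_* λ`.
-/

open MeasureTheory ENNReal

namespace MeasureTheory.Measure

variable {α β : Type*} [MeasurableSpace α] [MeasurableSpace β]

theorem withDensity_withDensity_of_measurable_left (μ : Measure α) {f g : α → ℝ≥0∞}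
    (hf : Measurable f) (hf_top : ∀ x, f x ≠ ∞) :
    (μ.withDensity f).withDensity g = μ.withDensity (f * g) := by
  ext A hA
  rw [withDensity_apply _ hA, withDensity_apply _ hA,
    setLIntegral_withDensity_eq_setLIntegral_mul_non_measurable _ hf _ hA
      (ae_of_all _ fun x => (hf_top x).lt_top)]

theorem _root_.MeasurableEmbedding.map_withDensity_comp {f : α → β} (hf : MeasurableEmbedding f)
    (μ : Measure α) (g : β → ℝ≥0∞) :
    (μ.withDensity (g ∘ f)).map f = (μ.map f).withDensity g := by
  ext A hA
  rw [hf.map_apply, withDensity_apply _ (hf.measurable hA), withDensity_apply _ hA,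
    hf.restrict_map, hf.lintegral_map]
  rfl

theorem map_linearMap_add_const_addHaar {E : Type*} [NormedAddCommGroup E] [NormedSpace ℝ E]
    [MeasurableSpace E] [BorelSpace E] [FiniteDimensional ℝ E] (μ : Measure E) [μ.IsAddHaarMeasure]
    {L : E →ₗ[ℝ] E} (hL : LinearMap.det L ≠ 0) (c : E) :
    μ.map (fun x => L x + c) = ENNReal.ofReal |(LinearMap.det L)⁻¹| • μ := by
  have hLm : Measurable L := L.continuous_of_finiteDimensional.measurable
  change μ.map ((· + c) ∘ L) = _
  rw [← map_map (measurable_add_const c) hLm, map_linearMap_addHaar_eq_smul_addHaar μ hL,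
    Measure.map_smul, map_add_right_eq_self]

theorem map_skewProd_prod (μ : Measure α) {ν : Measure β} [SFinite ν] {φ : α → β → β}
    (hφ : Measurable fun x : α × β => φ x.1 x.2) {c : α → ℝ≥0∞} (hc : Measurable c)
    (hφν : ∀ a, ν.map (φ a) = c a • ν) :
    (μ.prod ν).map (fun x => (x.1, φ x.1 x.2)) = (μ.prod ν).withDensity (fun x => c x.1) := by
  have hφa (a : α) : Measurable (φ a) := hφ.comp measurable_prodMk_left
  rw [← prod_withDensity_left hc]
  ext A hA
  have hF : Measurable fun x : α × β => (x.1, φ x.1 x.2) := measurable_fst.prodMk hφ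
  rw [map_apply hF hA, prod_apply (hF hA), prod_apply hA,
    lintegral_withDensity_eq_lintegral_mul _ hc (measurable_measure_prodMk_left hA)]
  refine lintegral_congr fun a => ?_
  rw [Pi.mul_apply, ← smul_eq_mul, ← Measure.smul_apply, ← hφν,
    map_apply (hφa a) (measurable_prodMk_left hA)]
  rfl

end MeasureTheory.Measure

theorem Real.map_volume_pi_mul_add {ι : Type*} [Fintype ι] {d : ι → ℝ} (hd : ∀ i, d i ≠ 0)
    (c : ι → ℝ) :
    (volume : Measure (ι → ℝ)).map (fun b i => b i * d i + c i)
      = ENNReal.ofReal |(∏ i, d i)⁻¹| • volume := by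
  classical
  have hdet : LinearMap.det (Matrix.toLin' (Matrix.diagonal d)) = ∏ i, d i := by
    rw [LinearMap.det_toLin', Matrix.det_diagonal]
  rw [← hdet, ← Measure.map_linearMap_add_const_addHaar volume
    (hdet ▸ Finset.prod_ne_zero_iff.mpr fun i _ => hd i) c]
  congr with b i
  simp [Matrix.mulVec_diagonal, mul_comm]

section AffineCoupling

open Measure

variable {α ι : Type*}

noncomputable def affineCoupling (s t : α → ι → ℝ) (x : α × (ι → ℝ)) : α × (ι → ℝ) :=
  (x.1, fun j => x.2 j * Real.exp (s x.1 j) + t x.1 j)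

noncomputable def affineCouplingInv (s t : α → ι → ℝ) (y : α × (ι → ℝ)) : α × (ι → ℝ) :=
  (y.1, fun j => (y.2 j - t y.1 j) * Real.exp (-s y.1 j))

theorem affineCouplingInv_affineCoupling (s t : α → ι → ℝ) (x : α × (ι → ℝ)) :
    affineCouplingInv s t (affineCoupling s t x) = x := by
  ext j <;> simp [affineCoupling, affineCouplingInv, Real.exp_neg]

theorem affineCoupling_affineCouplingInv (s t : α → ι → ℝ) (y : α × (ι → ℝ)) :
    affineCoupling s t (affineCouplingInv s t y) = y := by
  ext j <;> simp [affineCoupling, affineCouplingInv, Real.exp_neg]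

variable [MeasurableSpace α] {s t : α → ι → ℝ}

theorem measurable_affineCoupling (hs : Measurable s) (ht : Measurable t) :
    Measurable (affineCoupling s t) := by
  unfold affineCoupling; fun_prop

theorem measurable_affineCouplingInv (hs : Measurable s) (ht : Measurable t) :
    Measurable (affineCouplingInv s t) := by
  unfold affineCouplingInv; fun_prop

theorem measurableEmbedding_affineCoupling (hs : Measurable s) (ht : Measurable t) :
    MeasurableEmbedding (affineCoupling s t) :=
  .of_measurable_inverse (measurable_affineCoupling hs ht)
    ((Function.LeftInverse.surjective (affineCoupling_affineCouplingInv s t)).range_eq ▸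
      MeasurableSet.univ)
    (measurable_affineCouplingInv hs ht) (affineCouplingInv_affineCoupling s t)

theorem map_affineCoupling_prod_volume [Fintype ι] (μ : Measure α) (hs : Measurable s)
    (ht : Measurable t) :
    (μ.prod volume).map (affineCoupling s t)
      = (μ.prod volume).withDensity fun y => ENNReal.ofReal (Real.exp (-∑ j, s y.1 j)) := by
  refine map_skewProd_prod μ (φ := fun a b j => b j * Real.exp (s a j) + t a j)
    (c := fun a => ENNReal.ofReal (Real.exp (-∑ j, s a j))) (by fun_prop) (by fun_prop)
    fun a => ?_
  rw [Real.map_volume_pi_mul_add (fun j => (Real.exp_pos _).ne'), ← Real.exp_sum, ← Real.exp_neg,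
    abs_of_pos (Real.exp_pos _)]

end AffineCoupling

theorem affine_coupling_pushforward_density_general
    (D k : ℕ)
    (s t : (Fin k → ℝ) → (Fin (D - k) → ℝ))
    (hs : ContDiff ℝ 1 s) (ht : ContDiff ℝ 1 t)
    (f : (Fin k → ℝ) × (Fin (D - k) → ℝ) → (Fin k → ℝ) × (Fin (D - k) → ℝ))
    (hf : ∀ x, f x = (x.1, fun j => x.2 j * Real.exp (s x.1 j) + t x.1 j))
    (ν : Measure ((Fin k → ℝ) × (Fin (D - k) → ℝ)))
    (p : (Fin k → ℝ) × (Fin (D - k) → ℝ) → ℝ)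
    (hν : ν = volume.withDensity (fun x => ENNReal.ofReal (p x))) :
    Measure.map f ν
      = volume.withDensity (fun y =>
          ENNReal.ofReal
            (p (y.1, fun j => (y.2 j - t y.1 j) * Real.exp (-(s y.1 j)))
              * Real.exp (-(∑ j, s y.1 j)))) := by
  have hsm : Measurable s := hs.continuous.measurable
  have htm : Measurable t := ht.continuous.measurable
  have hp : (fun x => ENNReal.ofReal (p x))
      = (fun y => ENNReal.ofReal (p (affineCouplingInv s t y))) ∘ affineCoupling s t :=
    funext fun x => by rw [Function.comp_apply, affineCouplingInv_affineCoupling]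
  rw [show f = affineCoupling s t from funext hf, hν, hp,
    (measurableEmbedding_affineCoupling hsm htm).map_withDensity_comp, Measure.volume_eq_prod,
    map_affineCoupling_prod_volume _ hsm htm,
    Measure.withDensity_withDensity_of_measurable_left _ (by fun_prop) fun _ => ofReal_ne_top]
  congr with y
  rw [Pi.mul_apply, ENNReal.ofReal_mul' (Real.exp_pos _).le, mul_comm]
  rfl

theorem affine_coupling_pushforward_density
    (D k : ℕ) (hD : 2 ≤ D) (hk1 : 1 ≤ k) (hkD : k < D)
    (s t : (Fin k → ℝ) → (Fin (D - k) → ℝ))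
    (hs : ContDiff ℝ 1 s) (ht : ContDiff ℝ 1 t)
    (f : (Fin k → ℝ) × (Fin (D - k) → ℝ) → (Fin k → ℝ) × (Fin (D - k) → ℝ))
    (hf : ∀ x, f x = (x.1, fun j => x.2 j * Real.exp (s x.1 j) + t x.1 j))
    (ν : Measure ((Fin k → ℝ) × (Fin (D - k) → ℝ))) [IsProbabilityMeasure ν]
    (p : (Fin k → ℝ) × (Fin (D - k) → ℝ) → ℝ)
    (hp_meas : Measurable p) (hp_nonneg : ∀ x, 0 ≤ p x)
    (hν : ν = volume.withDensity (fun x => ENNReal.ofReal (p x))) :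
    Measure.map f ν
      = volume.withDensity (fun y =>
          ENNReal.ofReal
            (p (y.1, fun j => (y.2 j - t y.1 j) * Real.exp (-(s y.1 j)))
              * Real.exp (-(∑ j, s y.1 j)))) :=
  affine_coupling_pushforward_density_general D k s t hs ht f hf ν p hν
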